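/- With the pointwise warped-product curvature data of the setup, and a real L: if R·R = L Q(S,R) holds on V (all operations taken with respect to g), then at least one of the following holds: R̄ = 0, or T = 0, or S̃ = (κ̃/q) g̃ (the fiber data is Einstein). -/

import Mathlib

/- Pointwise algebraic operations used for pseudosymmetry-type curvature conditions. -/
namespace WPS

variable {V : Type} [AddCommGroup V] [Module ℝ V]

/-- The endomorphism `X ∧_A Y` given by `(X ∧_A Y) Z = A(Y,Z) X - A(X,Z) Y`. -/
def wedge (A : V → V → ℝ) (X Y Z : V) : V := A Y Z • X - A X Z • Y

/-- `(D · H)(X₁,X₂,X₃,X₄; X,Y)` for a (0,4)-tensor `H`, where `Dop X Y` is the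
curvature operator `𝒟(X,Y)` of `D`. -/
def dot4 (Dop : V → V → V → V) (H : V → V → V → V → ℝ)
    (X1 X2 X3 X4 X Y : V) : ℝ :=
  -H (Dop X Y X1) X2 X3 X4 - H X1 (Dop X Y X2) X3 X4
    - H X1 X2 (Dop X Y X3) X4 - H X1 X2 X3 (Dop X Y X4)

/-- `(D · H)(X₁,X₂; X,Y)` for a (0,2)-tensor `H`. -/
def dot2 (Dop : V → V → V → V) (H : V → V → ℝ) (X1 X2 X Y : V) : ℝ :=
  -H (Dop X Y X1) X2 - H X1 (Dop X Y X2)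

/-- The Tachibana operator `Q(A,H)` for a (0,4)-tensor `H`. -/
def Q4 (A : V → V → ℝ) (H : V → V → V → V → ℝ) :
    V → V → V → V → V → V → ℝ := dot4 (wedge A) H

/-- The Tachibana operator `Q(A,H)` for a (0,2)-tensor `H`. -/
def Q2 (A : V → V → ℝ) (H : V → V → ℝ) : V → V → V → V → ℝ := dot2 (wedge A) H

/-- Symmetric bilinear form (as a bare function). -/
def SymBilin (A : V → V → ℝ) : Prop :=
  (∀ x y, A x y = A y x) ∧ ∀ y, IsLinearMap ℝ fun x => A x y

/-- Nondegeneracy of a bilinear form. -/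
def Nondeg (g : V → V → ℝ) : Prop := ∀ x, (∀ y, g x y = 0) → x = 0

/-- Algebraic curvature tensor: multilinear, with the antisymmetries, pair symmetry
and first Bianchi identity of a Riemann curvature tensor. -/
def Curv (R : V → V → V → V → ℝ) : Prop :=
  (∀ y z w, IsLinearMap ℝ fun x => R x y z w) ∧
  (∀ x z w, IsLinearMap ℝ fun y => R x y z w) ∧
  (∀ x y w, IsLinearMap ℝ fun z => R x y z w) ∧
  (∀ x y z, IsLinearMap ℝ fun w => R x y z w) ∧
  (∀ x y z w, R x y z w = -R y x z w) ∧
  (∀ x y z w, R x y z w = -R x y w z) ∧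
  (∀ x y z w, R x y z w = R z w x y) ∧
  ∀ x y z w, R x y z w + R y z x w + R z x y w = 0

/-- The Gaussian-type tensor `G(x,y,z,w) = g(x,w) g(y,z) - g(x,z) g(y,w)`. -/
def Gten (g : V → V → ℝ) (x y z w : V) : ℝ := g x w * g y z - g x z * g y w

end WPS

/-!
Only the mixed components of `R · R = L Q(S, R)` are needed. The curvature operator of a base
vector and a fibre vector is explicit: `𝒟((w,0),(0,b)) Z = (-f g̃(b,Z₂) T♯w, T(w,Z₁) b)`.
Evaluating the condition on `(x̄,ȳ,z̄,ã; w̄,b̃)` gives an identity in which `S̃(b,a)` is the only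
fibre quantity not proportional to `g̃(b,a)`, with coefficient `L R̄(x,y,z,w)`; so if `L ≠ 0` and
`R̄ ≠ 0` the fibre is Einstein. If `L = 0`, evaluating on `(x̄,ã,b̃,c̃; ȳ,d̃)` shows that
`T(y,x) R̃` is a multiple of `G̃`; so if `T ≠ 0`, `R̃` has constant curvature and again the fibre
is Einstein.
-/

namespace WPS

variable {V : Type} [AddCommGroup V] [Module ℝ V]

namespace SymBilin

variable {A : V → V → ℝ}

theorem zero_left (hA : SymBilin A) (y : V) : A 0 y = 0 := (hA.2 y).map_zero

theorem zero_right (hA : SymBilin A) (x : V) : A x 0 = 0 := by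
  rw [hA.1]; exact hA.zero_left x

theorem smul_left (hA : SymBilin A) (k : ℝ) (x y : V) : A (k • x) y = k * A x y :=
  (hA.2 y).map_smul k x

theorem smul_right (hA : SymBilin A) (k : ℝ) (x y : V) : A x (k • y) = k * A x y := by
  rw [hA.1, hA.smul_left, hA.1]

theorem sub_left (hA : SymBilin A) (x y z : V) : A (x - y) z = A x z - A y z :=
  (hA.2 z).map_sub x y

end SymBilin

theorem Nondeg.ext {g : V → V → ℝ} (hg : SymBilin g) (hn : Nondeg g) {x y : V}
    (h : ∀ u, g x u = g y u) : x = y :=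
  sub_eq_zero.mp <| hn _ fun u => by rw [hg.sub_left, h, sub_self]

namespace Curv

variable {R : V → V → V → V → ℝ}

theorem zero₁ (hR : Curv R) (y z w : V) : R 0 y z w = 0 := (hR.1 y z w).map_zero

theorem zero₂ (hR : Curv R) (x z w : V) : R x 0 z w = 0 := (hR.2.1 x z w).map_zero

theorem zero₃ (hR : Curv R) (x y w : V) : R x y 0 w = 0 := (hR.2.2.1 x y w).map_zero

theorem zero₄ (hR : Curv R) (x y z : V) : R x y z 0 = 0 := (hR.2.2.2.1 x y z).map_zero

theorem smul₁ (hR : Curv R) (k : ℝ) (x y z w : V) : R (k • x) y z w = k * R x y z w :=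
  (hR.1 y z w).map_smul k x

theorem smul₄ (hR : Curv R) (k : ℝ) (x y z w : V) : R x y z (k • w) = k * R x y z w :=
  (hR.2.2.2.1 x y z).map_smul k w

end Curv

def IsGTrace (g B : V → V → ℝ) (t : ℝ) : Prop :=
  ∃ E : V →ₗ[ℝ] V, (∀ x y, g (E x) y = B x y) ∧ t = LinearMap.trace ℝ V E

def IsRicci (g : V → V → ℝ) (R : V → V → V → V → ℝ) (S : V → V → ℝ) : Prop :=
  ∀ y z, IsGTrace g (fun x w => R x y z w) (S y z)

namespace IsGTrace

variable {g B : V → V → ℝ} {t : ℝ}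

theorem eq_trace (hg : SymBilin g) (hn : Nondeg g) (h : IsGTrace g B t) {E : V →ₗ[ℝ] V}
    (hE : ∀ x y, g (E x) y = B x y) : t = LinearMap.trace ℝ V E := by
  obtain ⟨E', hE', rfl⟩ := h
  congr 1
  ext x
  exact hn.ext hg fun u => by rw [hE, hE']

theorem eq_zero (hg : SymBilin g) (hn : Nondeg g) (h : IsGTrace g B t)
    (hB : ∀ x y, B x y = 0) : t = 0 := by
  rw [h.eq_trace hg hn (E := 0) fun x y => by rw [LinearMap.zero_apply, hg.zero_left, hB],
    map_zero]

theorem eq_mul_finrank [FiniteDimensional ℝ V] (hg : SymBilin g) (hn : Nondeg g) {c : ℝ}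
    (h : IsGTrace g (fun x y => c * g x y) t) : t = c * Module.finrank ℝ V := by
  rw [h.eq_trace hg hn (E := c • LinearMap.id) fun x y => hg.smul_left c x y, map_smul,
    LinearMap.trace_id, smul_eq_mul]

end IsGTrace

namespace IsRicci

variable {g : V → V → ℝ} {R : V → V → V → V → ℝ} {S : V → V → ℝ}

theorem zero_left (hg : SymBilin g) (hn : Nondeg g) (hR : Curv R) (hS : IsRicci g R S)
    (z : V) : S 0 z = 0 :=
  (hS 0 z).eq_zero hg hn fun x w => hR.zero₂ x z w

theorem zero_right (hg : SymBilin g) (hn : Nondeg g) (hR : Curv R) (hS : IsRicci g R S)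
    (y : V) : S y 0 = 0 :=
  (hS y 0).eq_zero hg hn fun x w => hR.zero₃ x y w

theorem eq_of_eq_mul_Gten [FiniteDimensional ℝ V] (hg : SymBilin g) (hn : Nondeg g)
    (hS : IsRicci g R S) {μ : ℝ} (hR : ∀ x y z w, R x y z w = μ * Gten g x y z w) (a b : V) :
    S a b = μ * (Module.finrank ℝ V - 1) * g a b := by
  let φ : V →ₗ[ℝ] ℝ := IsLinearMap.mk' _ (hg.2 b)
  let E : V →ₗ[ℝ] V := (μ * g a b) • LinearMap.id - μ • φ.smulRight a
  have hE : ∀ x w, g (E x) w = R x a b w := by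
    intro x w
    simp only [E, hR, Gten, LinearMap.sub_apply, LinearMap.smul_apply, LinearMap.id_apply,
      LinearMap.smulRight_apply, hg.sub_left, hg.smul_left, φ, IsLinearMap.mk'_apply]
    rw [hg.1 a w]
    ring
  rw [(hS a b).eq_trace hg hn hE, map_sub, map_smul, map_smul, LinearMap.trace_id,
    LinearMap.trace_smulRight, smul_eq_mul, smul_eq_mul, IsLinearMap.mk'_apply]
  ring

end IsRicci

theorem eq_div_finrank_mul_of_eq_mul [FiniteDimensional ℝ V] {g S : V → V → ℝ} {κ c : ℝ}
    (hg : SymBilin g) (hn : Nondeg g) (hd : Module.finrank ℝ V ≠ 0) (hκ : IsGTrace g S κ)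
    (hS : ∀ a b, S a b = c * g a b) (a b : V) :
    S a b = κ / Module.finrank ℝ V * g a b := by
  obtain rfl : S = fun a b => c * g a b := funext fun a => funext (hS a)
  rw [hκ.eq_mul_finrank hg hn, mul_div_cancel_right₀ _ (Nat.cast_ne_zero.mpr hd)]

def IsWarpedMetric {Vb Vf : Type} (gb : Vb → Vb → ℝ) (gf : Vf → Vf → ℝ) (f : ℝ)
    (gV : Vb × Vf → Vb × Vf → ℝ) : Prop :=
  ∀ X Y, gV X Y = gb X.1 Y.1 + f * gf X.2 Y.2

def IsWarpedCurvature {Vb Vf : Type} (gf : Vf → Vf → ℝ) (f Δ : ℝ) (T : Vb → Vb → ℝ)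
    (Rb : Vb → Vb → Vb → Vb → ℝ) (Rf : Vf → Vf → Vf → Vf → ℝ)
    (RV : Vb × Vf → Vb × Vf → Vb × Vf → Vb × Vf → ℝ) : Prop :=
  ∀ X Y Z W, RV X Y Z W = Rb X.1 Y.1 Z.1 W.1
    + f * (T X.1 Z.1 * gf Y.2 W.2 + T Y.1 W.1 * gf X.2 Z.2
      - T X.1 W.1 * gf Y.2 Z.2 - T Y.1 Z.1 * gf X.2 W.2)
    + f * Rf X.2 Y.2 Z.2 W.2 - f ^ 2 * Δ * Gten gf X.2 Y.2 Z.2 W.2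

section WarpedProduct

variable {Vb Vf : Type} [AddCommGroup Vb] [Module ℝ Vb] [AddCommGroup Vf] [Module ℝ Vf]
  {gb T : Vb → Vb → ℝ} {gf : Vf → Vf → ℝ} {f Δ : ℝ} {Tsh : Vb →ₗ[ℝ] Vb}
  {Rb : Vb → Vb → Vb → Vb → ℝ} {Rf : Vf → Vf → Vf → Vf → ℝ}
  {gV : Vb × Vf → Vb × Vf → ℝ} {RV : Vb × Vf → Vb × Vf → Vb × Vf → Vb × Vf → ℝ}
  {Rop : Vb × Vf → Vb × Vf → Vb × Vf → Vb × Vf}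

theorem curvatureOp_base_fiber (hgb : SymBilin gb) (hgbn : Nondeg gb) (hgf : SymBilin gf)
    (hgfn : Nondeg gf) (hf : f ≠ 0) (hT : SymBilin T) (hTsh : ∀ x y, gb (Tsh x) y = T x y)
    (hRb : Curv Rb) (hRf : Curv Rf) (hgV : IsWarpedMetric gb gf f gV)
    (hRV : IsWarpedCurvature gf f Δ T Rb Rf RV) (hRop : ∀ X Y Z W, gV (Rop X Y Z) W = RV X Y Z W)
    (w : Vb) (b : Vf) (Z : Vb × Vf) :
    Rop (w, 0) (0, b) Z = (-(f * gf b Z.2) • Tsh w, T w Z.1 • b) := by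
  refine Prod.ext (hgbn.ext hgb fun u => ?_) (hgfn.ext hgf fun u => ?_)
  · have h := hRop (w, 0) (0, b) Z (u, 0)
    rw [hgV, hRV] at h
    simp only [Gten, hgf.zero_left, hgf.zero_right, hT.zero_left, hRb.zero₂, hRf.zero₁,
      mul_zero, zero_mul, add_zero, zero_add, sub_zero, zero_sub] at h
    rw [hgb.smul_left, hTsh]
    linear_combination h
  · have h := hRop (w, 0) (0, b) Z (0, u)
    rw [hgV, hRV] at h
    simp only [Gten, hgb.zero_right, hgf.zero_left, hT.zero_left, hT.zero_right, hRb.zero₂,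
      hRf.zero₁, mul_zero, zero_mul, add_zero, zero_add, sub_zero] at h
    rw [hgf.smul_left]
    exact mul_left_cancel₀ hf (by linear_combination h)

theorem fiber_ricci_proportional_of_pseudosymmetric (hgb : SymBilin gb) (hgbn : Nondeg gb)
    (hgf : SymBilin gf) (hgfn : Nondeg gf) (hT : SymBilin T) (hRb : Curv Rb) (hRf : Curv Rf)
    (hRV : IsWarpedCurvature gf f Δ T Rb Rf RV)
    (hD : ∀ w b Z, Rop (w, 0) (0, b) Z = (-(f * gf b Z.2) • Tsh w, T w Z.1 • b))
    {Sb : Vb → Vb → ℝ} {Sf : Vf → Vf → ℝ} {SV : Vb × Vf → Vb × Vf → ℝ} {q Ω L : ℝ}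
    (hSb : IsRicci gb Rb Sb) (hSf : IsRicci gf Rf Sf)
    (hSV : ∀ X Y, SV X Y = (Sb X.1 Y.1 - q * T X.1 Y.1) + (Sf X.2 Y.2 + Ω * gf X.2 Y.2))
    (hmain : ∀ X1 X2 X3 X4 X Y, dot4 Rop RV X1 X2 X3 X4 X Y = L * Q4 SV RV X1 X2 X3 X4 X Y)
    (hL : L ≠ 0) {x y z w : Vb} (hR : Rb x y z w ≠ 0) :
    ∃ c, ∀ a b, Sf a b = c * gf a b := by
  refine ⟨(L * f * ((Sb w y - q * T w y) * T x z - (Sb w x - q * T w x) * T y z)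
      - f * (T y z * T w x - T x z * T w y + Rb x y z (Tsh w))) / (L * Rb x y z w) - Ω,
    fun a b => ?_⟩
  have H := hmain (x, 0) (y, 0) (z, 0) (0, b) (w, 0) (0, a)
  simp only [dot4, Q4, wedge, hD, hRV _ _ _ _, hSV, Gten,
    Prod.smul_mk, Prod.mk_sub_mk, smul_zero, sub_zero, zero_sub, ← neg_smul,
    hgf.zero_left, hgf.zero_right, hT.zero_left, hT.zero_right, hSb.zero_left hgb hgbn hRb,
    hSb.zero_right hgb hgbn hRb, hSf.zero_left hgf hgfn hRf, hSf.zero_right hgf hgfn hRf,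
    hRb.zero₄, hRf.zero₁, hRf.zero₂, hgf.smul_left, hT.smul_left, hT.smul_right, hRb.smul₄,
    mul_zero, zero_mul, add_zero, zero_add, sub_zero, zero_sub, neg_zero, neg_neg,
    mul_neg, neg_mul] at H
  field_simp
  linear_combination H

theorem fiber_eq_mul_Gten_of_semisymmetric (hgf : SymBilin gf) (hf : f ≠ 0) (hT : SymBilin T)
    (hRb : Curv Rb) (hRf : Curv Rf) (hRV : IsWarpedCurvature gf f Δ T Rb Rf RV)
    (hD : ∀ w b Z, Rop (w, 0) (0, b) Z = (-(f * gf b Z.2) • Tsh w, T w Z.1 • b))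
    (hsemi : ∀ X1 X2 X3 X4 X Y, dot4 Rop RV X1 X2 X3 X4 X Y = 0) {x y : Vb} (hxy : T x y ≠ 0) :
    ∃ μ, ∀ a b c d, Rf a b c d = μ * Gten gf a b c d := by
  refine ⟨f * (Δ * T x y - T y (Tsh x)) / T x y, fun a b c d => ?_⟩
  have H := hsemi (y, 0) (0, b) (0, c) (0, d) (x, 0) (0, a)
  simp only [dot4, hD, hRV _ _ _ _, Gten, hgf.zero_left, hgf.zero_right, hT.zero_left,
    hT.zero_right, hRb.zero₁, hRb.zero₂, hRb.zero₃, hRf.zero₁, hgf.smul_left, hT.smul_right,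
    hRf.smul₁, mul_zero, zero_mul, add_zero, zero_add, sub_zero, zero_sub, neg_zero, neg_neg,
    zero_smul, mul_neg, neg_mul] at H
  rw [Gten]
  field_simp
  exact mul_left_cancel₀ hf (by linear_combination -H)

end WarpedProduct

end WPS

theorem stmt12_general
    {Vb Vf : Type} [AddCommGroup Vb] [Module ℝ Vb]
    [AddCommGroup Vf] [Module ℝ Vf] [FiniteDimensional ℝ Vf]
    (q : ℕ) (hq : 1 ≤ q)
    (hdf : Module.finrank ℝ Vf = q)
    (gb : Vb → Vb → ℝ) (hgb : WPS.SymBilin gb) (hgbn : WPS.Nondeg gb)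
    (gf : Vf → Vf → ℝ) (hgf : WPS.SymBilin gf) (hgfn : WPS.Nondeg gf)
    (f Δ : ℝ) (hf : 0 < f)
    (T : Vb → Vb → ℝ) (hT : WPS.SymBilin T)
    (Tsh : Vb →ₗ[ℝ] Vb) (hTsh : ∀ x y, gb (Tsh x) y = T x y)
    (Ω : ℝ)
    (Rb : Vb → Vb → Vb → Vb → ℝ) (hRb : WPS.Curv Rb)
    (Rf : Vf → Vf → Vf → Vf → ℝ) (hRf : WPS.Curv Rf)
    (Sb : Vb → Vb → ℝ)
    (hSb : ∀ y z, ∃ E : Vb →ₗ[ℝ] Vb, (∀ x w, gb (E x) w = Rb x y z w) ∧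
      Sb y z = LinearMap.trace ℝ Vb E)
    (Sf : Vf → Vf → ℝ)
    (hSf : ∀ y z, ∃ E : Vf →ₗ[ℝ] Vf, (∀ x w, gf (E x) w = Rf x y z w) ∧
      Sf y z = LinearMap.trace ℝ Vf E)
    (κf : ℝ)
    (hκf : ∃ E : Vf →ₗ[ℝ] Vf, (∀ x y, gf (E x) y = Sf x y) ∧
      κf = LinearMap.trace ℝ Vf E)
    (gV : Vb × Vf → Vb × Vf → ℝ)
    (hgV : ∀ X Y, gV X Y = gb X.1 Y.1 + f * gf X.2 Y.2)
    (RV : Vb × Vf → Vb × Vf → Vb × Vf → Vb × Vf → ℝ)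
    (hRV : ∀ X Y Z W, RV X Y Z W = Rb X.1 Y.1 Z.1 W.1
      + f * (T X.1 Z.1 * gf Y.2 W.2 + T Y.1 W.1 * gf X.2 Z.2
        - T X.1 W.1 * gf Y.2 Z.2 - T Y.1 Z.1 * gf X.2 W.2)
      + f * Rf X.2 Y.2 Z.2 W.2 - f ^ 2 * Δ * WPS.Gten gf X.2 Y.2 Z.2 W.2)
    (SV : Vb × Vf → Vb × Vf → ℝ)
    (hSV : ∀ X Y, SV X Y = (Sb X.1 Y.1 - (q : ℝ) * T X.1 Y.1)
      + (Sf X.2 Y.2 + Ω * gf X.2 Y.2))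
    (Rop : Vb × Vf → Vb × Vf → Vb × Vf → Vb × Vf)
    (hRop : ∀ X Y Z W, gV (Rop X Y Z) W = RV X Y Z W)
    (L : ℝ)
    (hmain : (∀ X1 X2 X3 X4 X Y : Vb × Vf, WPS.dot4 Rop RV X1 X2 X3 X4 X Y
      = L * WPS.Q4 SV RV X1 X2 X3 X4 X Y)) :
    (∀ x y z w : Vb, Rb x y z w = 0) ∨ (∀ x y : Vb, T x y = 0) ∨ (∀ a b : Vf, Sf a b = (κf / (q : ℝ)) * gf a b) := by
  have hD := WPS.curvatureOp_base_fiber hgb hgbn hgf hgfn hf.ne' hT hTsh hRb hRf hgV hRV hRop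
  have einstein (c : ℝ) (hc : ∀ a b, Sf a b = c * gf a b) (a b : Vf) :
      Sf a b = κf / q * gf a b := by
    subst hdf
    exact WPS.eq_div_finrank_mul_of_eq_mul hgf hgfn (by omega) hκf hc a b
  by_cases hL : L = 0
  · by_cases hT0 : ∀ x y : Vb, T x y = 0
    · exact Or.inr (Or.inl hT0)
    push Not at hT0
    obtain ⟨x, y, hxy⟩ := hT0
    have hsemi (X1 X2 X3 X4 X Y : Vb × Vf) : WPS.dot4 Rop RV X1 X2 X3 X4 X Y = 0 := by
      rw [hmain, hL, zero_mul]
    obtain ⟨μ, hμ⟩ :=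
      WPS.fiber_eq_mul_Gten_of_semisymmetric hgf hf.ne' hT hRb hRf hRV hD hsemi hxy
    exact Or.inr (Or.inr (einstein _ (WPS.IsRicci.eq_of_eq_mul_Gten hgf hgfn hSf hμ)))
  · by_cases hR0 : ∀ x y z w : Vb, Rb x y z w = 0
    · exact Or.inl hR0
    push Not at hR0
    obtain ⟨x, y, z, w, hR⟩ := hR0
    obtain ⟨c, hc⟩ := WPS.fiber_ricci_proportional_of_pseudosymmetric hgb hgbn hgf hgfn hT
      hRb hRf hRV hD hSb hSf hSV hmain hL hR
    exact Or.inr (Or.inr (einstein c hc))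

theorem stmt12
    {Vb Vf : Type} [AddCommGroup Vb] [Module ℝ Vb] [FiniteDimensional ℝ Vb]
    [AddCommGroup Vf] [Module ℝ Vf] [FiniteDimensional ℝ Vf]
    (p q : ℕ) (hp : 1 ≤ p) (hq : 1 ≤ q) (hn : 3 ≤ p + q)
    (hdb : Module.finrank ℝ Vb = p) (hdf : Module.finrank ℝ Vf = q)
    (gb : Vb → Vb → ℝ) (hgb : WPS.SymBilin gb) (hgbn : WPS.Nondeg gb)
    (gf : Vf → Vf → ℝ) (hgf : WPS.SymBilin gf) (hgfn : WPS.Nondeg gf)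
    (f Δ : ℝ) (hf : 0 < f)
    (T : Vb → Vb → ℝ) (hT : WPS.SymBilin T)
    (Tsh : Vb →ₗ[ℝ] Vb) (hTsh : ∀ x y, gb (Tsh x) y = T x y)
    (Ω : ℝ) (hΩ : Ω = -f * (((q : ℝ) - 1) * Δ + LinearMap.trace ℝ Vb Tsh))
    (Rb : Vb → Vb → Vb → Vb → ℝ) (hRb : WPS.Curv Rb)
    (Rf : Vf → Vf → Vf → Vf → ℝ) (hRf : WPS.Curv Rf)
    (Rbop : Vb → Vb → Vb → Vb) (hRbop : ∀ x y z w, gb (Rbop x y z) w = Rb x y z w)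
    (Rfop : Vf → Vf → Vf → Vf) (hRfop : ∀ x y z w, gf (Rfop x y z) w = Rf x y z w)
    (Sb : Vb → Vb → ℝ)
    (hSb : ∀ y z, ∃ E : Vb →ₗ[ℝ] Vb, (∀ x w, gb (E x) w = Rb x y z w) ∧
      Sb y z = LinearMap.trace ℝ Vb E)
    (Sf : Vf → Vf → ℝ)
    (hSf : ∀ y z, ∃ E : Vf →ₗ[ℝ] Vf, (∀ x w, gf (E x) w = Rf x y z w) ∧
      Sf y z = LinearMap.trace ℝ Vf E)
    (κf : ℝ)
    (hκf : ∃ E : Vf →ₗ[ℝ] Vf, (∀ x y, gf (E x) y = Sf x y) ∧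
      κf = LinearMap.trace ℝ Vf E)
    (gV : Vb × Vf → Vb × Vf → ℝ)
    (hgV : ∀ X Y, gV X Y = gb X.1 Y.1 + f * gf X.2 Y.2)
    (RV : Vb × Vf → Vb × Vf → Vb × Vf → Vb × Vf → ℝ)
    (hRV : ∀ X Y Z W, RV X Y Z W = Rb X.1 Y.1 Z.1 W.1
      + f * (T X.1 Z.1 * gf Y.2 W.2 + T Y.1 W.1 * gf X.2 Z.2
        - T X.1 W.1 * gf Y.2 Z.2 - T Y.1 Z.1 * gf X.2 W.2)
      + f * Rf X.2 Y.2 Z.2 W.2 - f ^ 2 * Δ * WPS.Gten gf X.2 Y.2 Z.2 W.2)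
    (SV : Vb × Vf → Vb × Vf → ℝ)
    (hSV : ∀ X Y, SV X Y = (Sb X.1 Y.1 - (q : ℝ) * T X.1 Y.1)
      + (Sf X.2 Y.2 + Ω * gf X.2 Y.2))
    (Rop : Vb × Vf → Vb × Vf → Vb × Vf → Vb × Vf)
    (hRop : ∀ X Y Z W, gV (Rop X Y Z) W = RV X Y Z W)
    (L : ℝ)
    (hmain : (∀ X1 X2 X3 X4 X Y : Vb × Vf, WPS.dot4 Rop RV X1 X2 X3 X4 X Y
      = L * WPS.Q4 SV RV X1 X2 X3 X4 X Y)) :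
    (∀ x y z w : Vb, Rb x y z w = 0) ∨ (∀ x y : Vb, T x y = 0) ∨ (∀ a b : Vf, Sf a b = (κf / (q : ℝ)) * gf a b) :=
  stmt12_general q hq hdf gb hgb hgbn gf hgf hgfn f Δ hf T hT Tsh hTsh Ω Rb hRb Rf hRf Sb hSb Sf hSf
    κf hκf gV hgV RV hRV SV hSV Rop hRop L hmain
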